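/- arXiv:1703.11008 — 2 statements merged into one kernel-verified Lean document; each statement's English description precedes it below -/
import Mathlib

section
/- For p ∈ (0,1), n ≥ 1, and t > 0: P( KL(q̂‖p) ≥ t and q̂ ≥ p ) ≤ exp(−n·t), where q̂ is the empirical mean of n i.i.d. Bernoulli(p) random variables. -/
open MeasureTheory

/-- Binary KL divergence between Bernoulli(q) and Bernoulli(p). -/
noncomputable def klBin (q p : ℝ) : ℝ :=
  q * Real.log (q / p) + (1 - q) * Real.log ((1 - q) / (1 - p))

/-- The Bernoulli(p) measure on `Bool`. -/
noncomputable def bernoulliMeasure (p : ℝ) : Measure Bool :=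
  ENNReal.ofReal p • Measure.dirac true + ENNReal.ofReal (1 - p) • Measure.dirac false

/-- Empirical mean of `n` Boolean samples. -/
noncomputable def empMean (n : ℕ) (x : Fin n → Bool) : ℝ :=
  (∑ i, if x i then (1:ℝ) else 0) / n

/-!
Change of measure. For `p ≤ a ≤ 1`, the logarithm of the likelihood ratio of Bernoulli(p)^n
to Bernoulli(a)^n at a sequence with `k` successes is affine in `k` with nonpositive slope
and equals `-n KL(a‖p)` at `k = n a`; so on `{q̂ ≥ a}` the ratio is at most
`exp (-n KL(a‖p))`, and since Bernoulli(a)^n has mass one, `P(q̂ ≥ a) ≤ exp (-n KL(a‖p))`.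
Taking for `a` the least empirical mean inside the event, which already has `KL(a‖p) ≥ t`,
gives the bound.
-/

open Finset Real

lemma bernoulliMeasure_singleton (p : ℝ) (b : Bool) :
    bernoulliMeasure p {b} = ENNReal.ofReal (if b then p else 1 - p) := by
  cases b <;> simp [bernoulliMeasure]

instance (p : ℝ) : IsFiniteMeasure (bernoulliMeasure p) :=
  ⟨by simp [bernoulliMeasure]⟩

lemma isProbabilityMeasure_bernoulliMeasure {p : ℝ} (h0 : 0 ≤ p) (h1 : p ≤ 1) :
    IsProbabilityMeasure (bernoulliMeasure p) :=
  ⟨by simp [bernoulliMeasure, ← ENNReal.ofReal_add h0 (sub_nonneg.2 h1)]⟩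

lemma pi_bernoulliMeasure_singleton {p : ℝ} (h0 : 0 ≤ p) (h1 : p ≤ 1) {n : ℕ}
    (x : Fin n → Bool) :
    Measure.pi (fun _ => bernoulliMeasure p) {x}
      = ENNReal.ofReal (p ^ #{i | x i = true} * (1 - p) ^ #{i | x i = false}) := by
  have h1p : 0 ≤ 1 - p := sub_nonneg.2 h1
  rw [← Set.univ_pi_singleton x, Measure.pi_pi]
  simp_rw [bernoulliMeasure_singleton]
  rw [← ENNReal.ofReal_prod_of_nonneg (fun i _ => by split_ifs <;> assumption), prod_ite]
  simp [prod_const]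

lemma card_filter_true_add_card_filter_false {n : ℕ} (x : Fin n → Bool) :
    #{i | x i = true} + #{i | x i = false} = n := by
  simpa using card_filter_add_card_filter_not (s := univ) (fun i => x i = true)

lemma empMean_eq {n : ℕ} (x : Fin n → Bool) :
    empMean n x = #{i | x i = true} / (#{i | x i = true} + #{i | x i = false} : ℕ) := by
  rw [empMean, card_filter_true_add_card_filter_false]
  congr 1
  simp [Finset.sum_boole]

lemma klBin_one (p : ℝ) : klBin 1 p = -log p := by
  simp [klBin]

lemma pow_mul_one_sub_pow_le_exp_klBin {p a : ℝ} (hp : 0 < p) (hpa : p ≤ a) (ha : a ≤ 1)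
    {k m : ℕ} (hk : ((k : ℝ) + m) * a ≤ k) :
    p ^ k * (1 - p) ^ m ≤ exp (-(k + m) * klBin a p) * (a ^ k * (1 - a) ^ m) := by
  rcases ha.eq_or_lt with rfl | ha
  · obtain rfl : m = 0 := Nat.le_zero.1 (by exact_mod_cast (by linarith : (m : ℝ) ≤ 0))
    simp [klBin_one, exp_nat_mul, exp_log hp]
  have h1p : 0 < 1 - p := by linarith
  have h1a : 0 < 1 - a := by linarith
  have hlog : log p ≤ log a := log_le_log hp hpa
  have hlog' : log (1 - a) ≤ log (1 - p) := log_le_log h1a (by linarith)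
  have hlog_ratio : k * log p + m * log (1 - p)
      ≤ -(k + m) * klBin a p + (k * log a + m * log (1 - a)) := by
    rw [klBin, log_div (hp.trans_le hpa).ne' hp.ne', log_div h1a.ne' h1p.ne']
    -- right side minus left side is `(k - (k + m) a) (log (a/p) + log ((1-p)/(1-a)))`
    have hslope : 0 ≤ log a - log p + (log (1 - p) - log (1 - a)) := by linarith
    nlinarith [mul_nonneg (sub_nonneg.2 hk) hslope]
  calc p ^ k * (1 - p) ^ m = exp (k * log p + m * log (1 - p)) := by
        rw [exp_add, exp_nat_mul, exp_nat_mul, exp_log hp, exp_log h1p]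
    _ ≤ exp (-(k + m) * klBin a p + (k * log a + m * log (1 - a))) := exp_le_exp.2 hlog_ratio
    _ = _ := by
        rw [exp_add, exp_add, exp_nat_mul, exp_nat_mul, exp_log (hp.trans_le hpa), exp_log h1a]

lemma mul_le_card_true_of_le_empMean {n : ℕ} {x : Fin n → Bool} {a : ℝ}
    (hx : a ≤ empMean n x) :
    ((#{i | x i = true} : ℝ) + #{i | x i = false}) * a ≤ #{i | x i = true} := by
  rw [empMean_eq, Nat.cast_add] at hx
  rcases (by positivity : (0 : ℝ) ≤ #{i | x i = true} + #{i | x i = false}).eq_or_lt with h | h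
  · simp [← h]
  · rwa [le_div_iff₀' h] at hx

lemma empMean_le_one {n : ℕ} (x : Fin n → Bool) : empMean n x ≤ 1 := by
  rw [empMean_eq]
  exact div_le_one_of_le₀ (by norm_cast; omega) (by positivity)

lemma pi_bernoulliMeasure_singleton_le {p a : ℝ} (hp : 0 < p) (hpa : p ≤ a) (ha : a ≤ 1)
    {n : ℕ} {x : Fin n → Bool} (hx : a ≤ empMean n x) :
    Measure.pi (fun _ => bernoulliMeasure p) {x}
      ≤ ENNReal.ofReal (exp (-n * klBin a p)) * Measure.pi (fun _ => bernoulliMeasure a) {x} := by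
  rw [pi_bernoulliMeasure_singleton hp.le (hpa.trans ha),
    pi_bernoulliMeasure_singleton (hp.le.trans hpa) ha, ← ENNReal.ofReal_mul (exp_nonneg _)]
  have hn : (n : ℝ) = #{i | x i = true} + #{i | x i = false} := by
    exact_mod_cast (card_filter_true_add_card_filter_false x).symm
  rw [hn]
  exact ENNReal.ofReal_le_ofReal
    (pow_mul_one_sub_pow_le_exp_klBin hp hpa ha (mul_le_card_true_of_le_empMean hx))

lemma pi_bernoulliMeasure_setOf_le_empMean_le {p a : ℝ} (hp : 0 < p) (hpa : p ≤ a)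
    (ha : a ≤ 1) (n : ℕ) :
    Measure.pi (fun _ : Fin n => bernoulliMeasure p) {x | a ≤ empMean n x}
      ≤ ENNReal.ofReal (exp (-n * klBin a p)) := by
  set c := ENNReal.ofReal (exp (-n * klBin a p))
  have := isProbabilityMeasure_bernoulliMeasure (hp.le.trans hpa) ha
  calc Measure.pi (fun _ : Fin n => bernoulliMeasure p) {x | a ≤ empMean n x}
      = ∑ x ∈ {x | a ≤ empMean n x}, Measure.pi (fun _ => bernoulliMeasure p) {x} := by
        rw [sum_measure_singleton, coe_filter_univ]
    _ ≤ ∑ x ∈ {x | a ≤ empMean n x}, c * Measure.pi (fun _ => bernoulliMeasure a) {x} :=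
        sum_le_sum fun x hx => pi_bernoulliMeasure_singleton_le hp hpa ha (mem_filter.1 hx).2
    _ = c * Measure.pi (fun _ : Fin n => bernoulliMeasure a) {x | a ≤ empMean n x} := by
        rw [← mul_sum, sum_measure_singleton, coe_filter_univ]
    _ ≤ c := mul_le_of_le_one_right' prob_le_one

theorem chernoff_upper_tail_kl_general (p : ℝ) (hp : p ∈ Set.Ioo (0:ℝ) 1)
    (n : ℕ) (t : ℝ) :
    Measure.pi (fun _ : Fin n => bernoulliMeasure p)
        {x | t ≤ klBin (empMean n x) p ∧ p ≤ empMean n x}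
      ≤ ENNReal.ofReal (Real.exp (-(n : ℝ) * t)) := by
  set E := {x : Fin n → Bool | t ≤ klBin (empMean n x) p ∧ p ≤ empMean n x}
  rcases E.eq_empty_or_nonempty with hE | hE
  · simp [hE]
  obtain ⟨x₀, ⟨ht, hpa⟩, hmin⟩ := E.exists_min_image (empMean n) E.toFinite hE
  calc Measure.pi (fun _ => bernoulliMeasure p) E
      ≤ Measure.pi (fun _ => bernoulliMeasure p) {x | empMean n x₀ ≤ empMean n x} :=
        measure_mono hmin
    _ ≤ ENNReal.ofReal (exp (-n * klBin (empMean n x₀) p)) :=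
        pi_bernoulliMeasure_setOf_le_empMean_le hp.1 hpa (empMean_le_one x₀) n
    _ ≤ ENNReal.ofReal (exp (-n * t)) :=
        ENNReal.ofReal_le_ofReal (exp_le_exp.2 (mul_le_mul_of_nonpos_left ht (by simp)))

/-- Upper-tail Chernoff–Hoeffding bound in KL form: for i.i.d. Bernoulli(p)
samples, `P( KL(q̂‖p) ≥ t and q̂ ≥ p ) ≤ exp(−n t)`. -/
theorem chernoff_upper_tail_kl (p : ℝ) (hp : p ∈ Set.Ioo (0:ℝ) 1)
    (n : ℕ) (hn : 1 ≤ n) (t : ℝ) (ht : 0 < t) :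
    Measure.pi (fun _ : Fin n => bernoulliMeasure p)
        {x | t ≤ klBin (empMean n x) p ∧ p ≤ empMean n x}
      ≤ ENNReal.ofReal (Real.exp (-(n : ℝ) * t)) :=
  chernoff_upper_tail_kl_general p hp n t
end

section
/- For a two-layer ReLU network with weights w, φ₁(w) = inf over all positive rescalings c ∈ ℝ₊^{(hidden units)} of γ_{1,∞}(w_c), where w_c is the rescaled weight vector (incoming weights to unit j multiplied by c_j, outgoing weight divided by c_j), γ_{1,∞}(w) = (maxⱼ ‖w⁽¹⁾_j‖₁)·‖w⁽²⁾‖₁, and φ₁ is the ℓ₁ path norm; moreover the infimum is attained when all hidden units have nonzero incoming and outgoing weights. -/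
/-- Neyshabur et al.'s characterization: the ℓ₁ path norm of a two-layer ReLU
network equals the infimum of the `γ_{1,∞}` norm
`(maxⱼ ‖w¹_j‖₁)·‖w²‖₁` over all positive layer-wise rescalings, and the
infimum is attained when every hidden unit has nonzero incoming and outgoing
weights. -/
theorem path_norm_eq_inf_gamma (n m : ℕ) (hm : 0 < m)
    (w1 : Matrix (Fin n) (Fin m) ℝ) (w2 : Fin m → ℝ) :
    IsGLB {g : ℝ | ∃ c : Fin m → ℝ, (∀ j, 0 < c j) ∧
        g = (Finset.univ.sup'
              (Finset.univ_nonempty_iff.mpr (Fin.pos_iff_nonempty.mp hm))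
              fun j => ∑ i, |c j * w1 i j|) * ∑ j, |w2 j / c j|}
      (∑ j, |w2 j| * ∑ i, |w1 i j|) ∧
    ((∀ j, (∑ i, |w1 i j|) ≠ 0 ∧ w2 j ≠ 0) →
      (∑ j, |w2 j| * ∑ i, |w1 i j|) ∈
        {g : ℝ | ∃ c : Fin m → ℝ, (∀ j, 0 < c j) ∧
          g = (Finset.univ.sup'
                (Finset.univ_nonempty_iff.mpr (Fin.pos_iff_nonempty.mp hm))
                fun j => ∑ i, |c j * w1 i j|) * ∑ j, |w2 j / c j|}) := by
  have hne : (Finset.univ : Finset (Fin m)).Nonempty :=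
    Finset.univ_nonempty_iff.mpr (Fin.pos_iff_nonempty.mp hm)
  set a : Fin m → ℝ := fun j => ∑ i, |w1 i j| with ha
  have ha0 : ∀ j, 0 ≤ a j := fun j => Finset.sum_nonneg fun i _ => abs_nonneg _
  have hsum : ∀ (c : Fin m → ℝ) (j : Fin m), 0 < c j →
      (∑ i, |c j * w1 i j|) = c j * a j := by
    intro c j hc
    simp [ha, abs_mul, abs_of_pos hc, Finset.mul_sum]
  -- lower bound
  have hlb : ∀ c : Fin m → ℝ, (∀ j, 0 < c j) →
      (∑ j, |w2 j| * a j) ≤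
      (Finset.univ.sup'
        (Finset.univ_nonempty_iff.mpr (Fin.pos_iff_nonempty.mp hm))
        fun j => ∑ i, |c j * w1 i j|) * ∑ j, |w2 j / c j| := by
    intro c hc
    have hSle : ∀ j, c j * a j ≤ (Finset.univ.sup'
        (Finset.univ_nonempty_iff.mpr (Fin.pos_iff_nonempty.mp hm))
        fun j => ∑ i, |c j * w1 i j|) := by
      intro j
      rw [← hsum c j (hc j)]
      exact Finset.le_sup' (fun j => ∑ i, |c j * w1 i j|) (Finset.mem_univ j)
    calc ∑ j, |w2 j| * a j
        = ∑ j, (|w2 j| / c j) * (c j * a j) := by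
          refine Finset.sum_congr rfl fun j _ => ?_
          rw [div_mul_eq_mul_div, mul_div_assoc, mul_comm (c j) (a j),
            mul_div_assoc, div_self (hc j).ne', mul_one]
      _ ≤ ∑ j, (|w2 j| / c j) * (Finset.univ.sup'
            (Finset.univ_nonempty_iff.mpr (Fin.pos_iff_nonempty.mp hm))
            fun j => ∑ i, |c j * w1 i j|) := by
          refine Finset.sum_le_sum fun j _ => ?_
          exact mul_le_mul_of_nonneg_left (hSle j)
            (div_nonneg (abs_nonneg _) (hc j).le)
      _ = (Finset.univ.sup'
            (Finset.univ_nonempty_iff.mpr (Fin.pos_iff_nonempty.mp hm))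
            fun j => ∑ i, |c j * w1 i j|) * ∑ j, |w2 j / c j| := by
          rw [Finset.mul_sum]
          refine Finset.sum_congr rfl fun j _ => ?_
          rw [abs_div, abs_of_pos (hc j), mul_comm]
  constructor
  · constructor
    · rintro g ⟨c, hc, rfl⟩
      exact hlb c hc
    · intro x hx
      refine le_of_forall_pos_le_add fun ε hε => ?_
      set B : ℝ := ∑ j, |w2 j| with hB
      have hB0 : 0 ≤ B := Finset.sum_nonneg fun j _ => abs_nonneg _
      set δ : ℝ := ε / (B + 1) with hδdef
      have hδ : 0 < δ := div_pos hε (by linarith)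
      set c : Fin m → ℝ := fun j => 1 / (a j + δ) with hc
      have haδ : ∀ j, 0 < a j + δ := fun j => by have := ha0 j; linarith
      have hcpos : ∀ j, 0 < c j := fun j => by positivity
      have hmem := hx ⟨c, hcpos, rfl⟩
      have hS1 : (Finset.univ.sup'
          (Finset.univ_nonempty_iff.mpr (Fin.pos_iff_nonempty.mp hm))
          fun j => ∑ i, |c j * w1 i j|) ≤ 1 := by
        refine Finset.sup'_le _ _ fun j _ => ?_
        rw [hsum c j (hcpos j)]
        show 1 / (a j + δ) * a j ≤ 1
        rw [div_mul_eq_mul_div, one_mul, div_le_one (haδ j)]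
        linarith [hδ]
      have hT : (∑ j, |w2 j / c j|) = (∑ j, |w2 j| * a j) + δ * B := by
        rw [hB, Finset.mul_sum, ← Finset.sum_add_distrib]
        refine Finset.sum_congr rfl fun j _ => ?_
        rw [abs_div, abs_of_pos (hcpos j)]
        show |w2 j| / (1 / (a j + δ)) = _
        rw [div_div_eq_mul_div, div_one]
        ring
      have hT0 : 0 ≤ ∑ j, |w2 j / c j| := Finset.sum_nonneg fun j _ => abs_nonneg _
      have hg : (Finset.univ.sup'
          (Finset.univ_nonempty_iff.mpr (Fin.pos_iff_nonempty.mp hm))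
          fun j => ∑ i, |c j * w1 i j|) * (∑ j, |w2 j / c j|)
          ≤ (∑ j, |w2 j| * a j) + δ * B := by
        calc _ ≤ 1 * (∑ j, |w2 j / c j|) :=
              mul_le_mul_of_nonneg_right hS1 hT0
          _ = (∑ j, |w2 j| * a j) + δ * B := by rw [one_mul, hT]
      have hδB : δ * B ≤ ε := by
        rw [hδdef]
        rw [div_mul_eq_mul_div, div_le_iff₀ (by linarith : (0:ℝ) < B + 1)]
        nlinarith
      calc x ≤ _ := hmem
        _ ≤ (∑ j, |w2 j| * a j) + δ * B := hg
        _ ≤ (∑ j, |w2 j| * a j) + ε := by linarith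
  · intro h
    set c : Fin m → ℝ := fun j => 1 / a j with hc
    have hapos : ∀ j, 0 < a j := fun j => lt_of_le_of_ne (ha0 j) (Ne.symm (h j).1)
    have hcpos : ∀ j, 0 < c j := fun j => by
      have := hapos j; positivity
    refine ⟨c, hcpos, ?_⟩
    have hval : ∀ j, (∑ i, |c j * w1 i j|) = 1 := by
      intro j
      rw [hsum c j (hcpos j)]
      show 1 / a j * a j = 1
      rw [one_div, inv_mul_cancel₀ (hapos j).ne']
    have hS : (Finset.univ.sup'
        (Finset.univ_nonempty_iff.mpr (Fin.pos_iff_nonempty.mp hm))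
        fun j => ∑ i, |c j * w1 i j|) = 1 := by
      refine le_antisymm (Finset.sup'_le _ _ fun j _ => (hval j).le) ?_
      have := Finset.le_sup' (f := fun j => ∑ i, |c j * w1 i j|)
        (b := hne.choose) (Finset.mem_univ _)
      rw [hval hne.choose] at this
      exact this
    rw [hS, one_mul]
    refine Finset.sum_congr rfl fun j _ => ?_
    rw [abs_div, abs_of_pos (hcpos j)]
    show _ = |w2 j| / (1 / a j)
    rw [div_div_eq_mul_div, div_one]
end
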